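/- For every dimension d ≥ 1 there is a constant C > 0, depending only on d, with the following property: for every N ≥ 2 and every tuple X = (x_1,…,x_N) of points in [0,1)^d whose coordinates satisfy x_{m,k} ≠ x_{n,k} for all m ≠ n and all 1 ≤ k ≤ d, one has Σ_{k ∈ ℤ^d, ‖k‖_∞ ≤ N} (1/r(k)) · |Σ_{ℓ=1}^N e^{2πi⟨k, x_ℓ⟩}|² ≤ C · E(X). -/

import Mathlib

/-- The energy functional
`E(X) = Σ_{1 ≤ m,n ≤ N, m ≠ n} Π_{k=1}^d φ(x_{m,k} − x_{n,k})` with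
`φ(s) = 1 − log(2|sin(πs)|)`. -/
noncomputable def energyE {N d : ℕ} (x : Fin N → Fin d → ℝ) : ℝ :=
  ∑ m : Fin N, ∑ n : Fin N,
    if m ≠ n then ∏ k : Fin d, (1 - Real.log (2 * |Real.sin (Real.pi * (x m k - x n k))|))
    else 0

section
open Finset Real

noncomputable def Kk (N : ℕ) (t : ℝ) : ℝ :=
  ∑ a ∈ Finset.Icc (-(N:ℤ)) N, (1 / max 1 |(a:ℝ)|) * Real.cos (2 * Real.pi * a * t)

/-- Dirichlet kernel bound. -/
lemma dirichlet_bound {t : ℝ} (ht0 : 0 < t) (ht1 : t < 1) (m n : ℕ) :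
    |∑ k ∈ Finset.Icc m n, Real.cos (2 * Real.pi * k * t)| ≤ 1 / Real.sin (Real.pi * t) := by
  have hsin : 0 < Real.sin (π * t) := by
    apply Real.sin_pos_of_pos_of_lt_pi (by positivity)
    nlinarith [Real.pi_pos]
  rcases le_or_gt m n with hmn | hmn
  · set z : ℂ := Complex.exp (2 * π * t * Complex.I) with hz
    have hzeq : z = Complex.exp (((2 * π * t : ℝ) : ℂ) * Complex.I) := by
      rw [hz]; push_cast; ring_nf
    have hz1 : z ≠ 1 := by
      rw [hz, Ne, Complex.exp_eq_one_iff]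
      rintro ⟨j, hj⟩
      have him := congrArg Complex.im hj
      simp [Complex.mul_I_im] at him
      have h2 : (2:ℝ) * π * t = (j:ℝ) * (2 * π) := by
        convert him using 1 <;> push_cast <;> ring_nf
      have htn : t = (j:ℝ) := by
        have hpi := Real.pi_pos
        nlinarith [h2]
      have h0 : (0:ℝ) < (j:ℝ) := htn ▸ ht0
      have h1 : (j:ℝ) < 1 := htn ▸ ht1
      have : (0:ℤ) < j := by exact_mod_cast h0
      have : (j:ℤ) < 1 := by exact_mod_cast h1
      omega
    have hcos : ∀ k : ℕ, Real.cos (2 * π * k * t) = (z ^ k).re := by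
      intro k
      rw [hz, ← Complex.exp_nat_mul]
      have : (k:ℂ) * (2 * ↑π * ↑t * Complex.I) = ((2 * π * k * t : ℝ) : ℂ) * Complex.I := by
        push_cast; ring
      rw [this, Complex.exp_ofReal_mul_I_re]
    have hsum : ∑ k ∈ Finset.Icc m n, Real.cos (2 * π * k * t)
        = (∑ k ∈ Finset.Icc m n, z ^ k).re := by
      rw [Complex.re_sum]; exact Finset.sum_congr rfl fun k _ => hcos k
    have hnorm1 : ∀ k : ℕ, ‖z ^ k‖ = 1 := by
      intro k
      rw [norm_pow, hz, Complex.norm_exp]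
      have : (2 * ↑π * ↑t * Complex.I : ℂ).re = 0 := by simp [Complex.mul_I_re]
      rw [this]; simp
    have hre : z.re = Real.cos (2 * π * t) := by rw [hzeq]; exact Complex.exp_ofReal_mul_I_re _
    have him : z.im = Real.sin (2 * π * t) := by
      rw [hzeq, Complex.exp_ofReal_mul_I_im]
    have hzn : ‖z - 1‖ = 2 * Real.sin (π * t) := by
      rw [Complex.norm_def, Complex.normSq_apply]
      simp only [Complex.sub_re, Complex.sub_im, Complex.one_re, Complex.one_im, hre, him,
        sub_zero]
      have hc2 : Real.cos (2 * π * t) = 1 - 2 * Real.sin (π*t)^2 := by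
        have h4 : Real.cos (2 * (π * t)) = 2 * Real.cos (π*t)^2 - 1 := Real.cos_two_mul _
        have h5 := Real.sin_sq_add_cos_sq (π*t)
        rw [show 2*π*t = 2*(π*t) by ring, h4]; nlinarith
      have hs2 : Real.sin (2 * π * t) = 2 * Real.sin (π*t) * Real.cos (π*t) := by
        rw [show 2*π*t = 2*(π*t) by ring]; exact Real.sin_two_mul _
      have : (Real.cos (2*π*t) - 1) * (Real.cos (2*π*t) - 1)
          + Real.sin (2*π*t) * Real.sin (2*π*t) = (2 * Real.sin (π*t))^2 := by
        rw [hc2, hs2]; nlinarith [Real.sin_sq_add_cos_sq (π*t)]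
      rw [this, Real.sqrt_sq (by positivity)]
    have hgeom : ∑ k ∈ Finset.Icc m n, z ^ k = (z ^ (n+1) - z ^ m) / (z - 1) := by
      rw [← Finset.Ico_add_one_right_eq_Icc]
      exact geom_sum_Ico hz1 (by omega)
    have hnormsum : ‖∑ k ∈ Finset.Icc m n, z ^ k‖ ≤ 1 / Real.sin (π * t) := by
      rw [hgeom, norm_div, hzn]
      rw [div_le_div_iff₀ (by positivity) hsin]
      have : ‖z ^ (n+1) - z ^ m‖ ≤ 2 := by
        calc ‖z ^ (n+1) - z ^ m‖ ≤ ‖z ^ (n+1)‖ + ‖z ^ m‖ := norm_sub_le _ _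
        _ ≤ 2 := by rw [hnorm1, hnorm1]; norm_num
      nlinarith [hsin]
    rw [hsum]
    exact le_trans (Complex.abs_re_le_norm _) hnormsum
  · rw [Finset.Icc_eq_empty (by omega)]
    simp; positivity

/-- Summation by parts identity. -/
lemma abel_identity (c : ℕ → ℝ) (m : ℕ) (p : ℕ) (hm : 1 ≤ m) :
    ∑ k ∈ Finset.Icc m (m+p), c k / k
      = (∑ k ∈ Finset.Icc m (m+p), c k) / (m+p)
        + ∑ j ∈ Finset.Ico m (m+p), (∑ k ∈ Finset.Icc m j, c k) * (1/j - 1/(j+1)) := by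
  induction p with
  | zero => simp
  | succ p ih =>
    have h1 : m ≤ m + p + 1 := by omega
    rw [show m + (p+1) = (m+p) + 1 by ring]
    rw [Finset.sum_Icc_succ_top h1, Finset.sum_Icc_succ_top h1,
      Finset.sum_Ico_succ_top (by omega : m ≤ m + p), ih]
    have hmp : ((m:ℝ)+p) ≠ 0 := by positivity
    have hmp1 : ((m:ℝ)+p+1) ≠ 0 := by positivity
    have hcast : ((m+p:ℕ):ℝ) = (m:ℝ)+p := by push_cast; ring
    have hcast1 : ((m+p+1:ℕ):ℝ) = (m:ℝ)+p+1 := by push_cast; ring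
    rw [hcast, hcast1]
    push_cast
    field_simp
    ring
/-- Abel summation bound. -/
lemma abel_bound (c : ℕ → ℝ) (B : ℝ) (hB : 0 ≤ B) (m n : ℕ) (hm : 1 ≤ m)
    (h : ∀ j, m ≤ j → j ≤ n → |∑ k ∈ Finset.Icc m j, c k| ≤ B) :
    |∑ k ∈ Finset.Icc m n, c k / k| ≤ B / m := by
  rcases le_or_gt m n with hmn | hmn
  · obtain ⟨p, rfl⟩ : ∃ p, n = m + p := ⟨n - m, by omega⟩
    rw [abel_identity c m p hm]
    have hb1 : |∑ k ∈ Finset.Icc m (m+p), c k| ≤ B := h _ (by omega) le_rfl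
    have hmr : (0:ℝ) < m := by exact_mod_cast hm
    calc |(∑ k ∈ Finset.Icc m (m+p), c k) / (↑m+↑p)
          + ∑ j ∈ Finset.Ico m (m+p), (∑ k ∈ Finset.Icc m j, c k) * (1/↑j - 1/(↑j+1))|
        ≤ |(∑ k ∈ Finset.Icc m (m+p), c k) / (↑m+↑p)|
          + |∑ j ∈ Finset.Ico m (m+p), (∑ k ∈ Finset.Icc m j, c k) * (1/↑j - 1/(↑j+1))| :=
          abs_add_le _ _
      _ ≤ B / (↑m+↑p) + ∑ j ∈ Finset.Ico m (m+p), B * (1/↑j - 1/(↑j+1)) := by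
          have hterm1 : |(∑ k ∈ Finset.Icc m (m+p), c k) / ((m:ℝ)+↑p)| ≤ B / (↑m+↑p) := by
            rw [abs_div, abs_of_pos (by positivity : (0:ℝ) < (m:ℝ)+↑p)]
            exact div_le_div_of_nonneg_right hb1 (by positivity) |>.trans le_rfl
          have hterm2 : |∑ j ∈ Finset.Ico m (m+p), (∑ k ∈ Finset.Icc m j, c k) * (1/(j:ℝ) - 1/(↑j+1))|
              ≤ ∑ j ∈ Finset.Ico m (m+p), B * (1/(j:ℝ) - 1/(↑j+1)) := by
            refine (Finset.abs_sum_le_sum_abs _ _).trans (Finset.sum_le_sum ?_)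
            intro j hj
            rw [Finset.mem_Ico] at hj
            have hj1 : (1:ℝ) ≤ (j:ℝ) := by exact_mod_cast le_trans hm hj.1
            have hw : (0:ℝ) ≤ 1/(j:ℝ) - 1/(↑j+1) := by
              rw [sub_nonneg]
              apply one_div_le_one_div_of_le (by linarith) (by linarith)
            rw [abs_mul, abs_of_nonneg hw]
            exact mul_le_mul_of_nonneg_right (h j hj.1 (by omega)) hw
          linarith
      _ = B / ↑m := by
          rw [← Finset.mul_sum]
          have htel : ∑ j ∈ Finset.Ico m (m+p), (1/(j:ℝ) - 1/((j:ℝ)+1)) = 1/(m:ℝ) - 1/((m:ℝ)+(p:ℝ)) := by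
            rw [Finset.sum_Ico_eq_sum_range]
            simp only [Nat.add_sub_cancel_left]
            have h0 := Finset.sum_range_sub' (fun j : ℕ => 1/((m:ℝ)+(j:ℝ))) p
            have h1 : ∑ i ∈ Finset.range p, (1/(((m+i:ℕ)):ℝ) - 1/((((m+i:ℕ)):ℝ)+1))
                = ∑ i ∈ Finset.range p, (1/((m:ℝ)+(i:ℝ)) - 1/((m:ℝ)+((i+1:ℕ):ℝ))) := by
              apply Finset.sum_congr rfl
              intro i _
              push_cast
              ring
            rw [h1, h0]
            norm_num
          rw [htel]
          have hmr' : (0:ℝ) < (m:ℝ)+↑p := by positivity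
          field_simp
          ring
  · rw [Finset.Icc_eq_empty (by omega)]
    simp
    positivity

lemma sum_Icc_int_symm (g : ℤ → ℝ) (hg : ∀ a, g (-a) = g a) (N : ℕ) :
    ∑ a ∈ Finset.Icc (-(N:ℤ)) N, g a = g 0 + 2 * ∑ k ∈ Finset.Icc (1:ℕ) N, g k := by
  have hsplit : Finset.Icc (-(N:ℤ)) N = Finset.Icc (-(N:ℤ)) (-1) ∪ Finset.Icc 0 N := by
    ext a; simp only [Finset.mem_Icc, Finset.mem_union]; omega
  have hdisj : Disjoint (Finset.Icc (-(N:ℤ)) (-1)) (Finset.Icc (0:ℤ) N) := by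
    rw [Finset.disjoint_left]
    intro a ha hb
    rw [Finset.mem_Icc] at ha hb
    omega
  rw [hsplit, Finset.sum_union hdisj]
  have h1 : ∑ a ∈ Finset.Icc (-(N:ℤ)) (-1), g a = ∑ k ∈ Finset.Icc (1:ℕ) N, g k := by
    refine Finset.sum_nbij' (fun a => (-a).toNat) (fun k => -(k:ℤ)) ?_ ?_ ?_ ?_ ?_
    · intro a ha; simp only [Finset.mem_Icc] at ha ⊢; omega
    · intro k hk; simp only [Finset.mem_Icc] at hk ⊢; omega
    · intro a ha; simp only [Finset.mem_Icc] at ha; omega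
    · intro k hk; simp only [Finset.mem_Icc] at hk; omega
    · intro a ha
      simp only [Finset.mem_Icc] at ha
      rw [show (((-a).toNat : ℤ)) = -a by omega, hg]
  have h2 : ∑ a ∈ Finset.Icc (0:ℤ) N, g a = g 0 + ∑ k ∈ Finset.Icc (1:ℕ) N, g k := by
    have : Finset.Icc (0:ℤ) N = insert (0:ℤ) (Finset.Icc (1:ℤ) (N:ℤ)) := by
      ext a; simp only [Finset.mem_Icc, Finset.mem_insert]; omega
    rw [this, Finset.sum_insert (by rw [Finset.mem_Icc]; omega)]
    congr 1
    refine Finset.sum_nbij' (fun a => a.toNat) (fun k => (k:ℤ)) ?_ ?_ ?_ ?_ ?_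
    · intro a ha; simp only [Finset.mem_Icc] at ha ⊢; omega
    · intro k hk; simp only [Finset.mem_Icc] at hk ⊢; omega
    · intro a ha; simp only [Finset.mem_Icc] at ha; omega
    · intro k hk; simp only [Finset.mem_Icc] at hk; omega
    · intro a ha
      simp only [Finset.mem_Icc] at ha
      rw [show ((a.toNat : ℤ)) = a by omega]
  rw [h1, h2]; ring

lemma Kk_eq (N : ℕ) (t : ℝ) :
    Kk N t = 1 + 2 * ∑ k ∈ Finset.Icc (1:ℕ) N, Real.cos (2 * Real.pi * k * t) / k := by
  rw [Kk, sum_Icc_int_symm]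
  · have hg0 : (1 / max 1 |((0:ℤ):ℝ)|) * Real.cos (2 * π * ((0:ℤ):ℝ) * 0 * t + 0) = 1 := by
      norm_num
    have hS : ∑ k ∈ Finset.Icc (1:ℕ) N, (1 / max 1 |(((k:ℕ):ℤ):ℝ)|) * Real.cos (2 * π * (((k:ℕ):ℤ):ℝ) * t)
        = ∑ k ∈ Finset.Icc (1:ℕ) N, Real.cos (2 * π * k * t) / k := by
      apply Finset.sum_congr rfl
      intro k hk
      rw [Finset.mem_Icc] at hk
      have hk1 : (1:ℝ) ≤ (k:ℝ) := by exact_mod_cast hk.1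
      push_cast
      rw [abs_of_nonneg (by linarith), max_eq_right hk1]
      ring
    rw [hS]
    norm_num
  · intro a
    have : (2 * π * ((-a:ℤ):ℝ) * t) = -(2 * π * (a:ℝ) * t) := by push_cast; ring
    rw [this, Real.cos_neg]
    push_cast
    rw [abs_neg]

lemma Kk_zero (N : ℕ) (hN : 1 ≤ N) : Kk N 0 ≤ 3 + 2 * Real.log N := by
  rw [Kk_eq]
  have : ∑ k ∈ Finset.Icc (1:ℕ) N, Real.cos (2 * π * k * 0) / k
      = ∑ k ∈ Finset.Icc (1:ℕ) N, ((k:ℝ))⁻¹ := by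
    apply Finset.sum_congr rfl
    intro k _
    rw [mul_zero, Real.cos_zero, one_div]
  rw [this]
  have hh : ∑ k ∈ Finset.Icc (1:ℕ) N, ((k:ℝ))⁻¹ = ((harmonic N : ℚ) : ℝ) := by
    rw [harmonic_eq_sum_Icc]
    push_cast
    rfl
  rw [hh]
  have := harmonic_le_one_add_log N
  linarith

lemma Kk_zero_nonneg (N : ℕ) : 0 ≤ Kk N 0 := by
  rw [Kk_eq]
  have : (0:ℝ) ≤ ∑ k ∈ Finset.Icc (1:ℕ) N, Real.cos (2 * π * k * 0) / k := by
    apply Finset.sum_nonneg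
    intro k hk
    rw [Finset.mem_Icc] at hk
    rw [mul_zero, Real.cos_zero]
    positivity
  linarith

lemma Kk_bound_half (N : ℕ) {t : ℝ} (h0 : 0 < t) (h2 : t ≤ 1/2) :
    |Kk N t| ≤ 30 * (1 - Real.log (2 * |Real.sin (Real.pi * t)|)) := by
  have hpi := Real.pi_pos
  have ht1 : t < 1 := by linarith
  have hsin : 0 < Real.sin (π * t) := by
    apply Real.sin_pos_of_pos_of_lt_pi (by positivity)
    nlinarith
  rw [abs_of_pos hsin]
  set φ : ℝ := 1 - Real.log (2 * Real.sin (π * t)) with hφ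
  -- φ ≥ 1/4
  have hφ4 : 1/4 ≤ φ := by
    have h1 : Real.sin (π * t) ≤ 1 := Real.sin_le_one _
    have h2' : Real.log (2 * Real.sin (π * t)) ≤ Real.log 2 :=
      Real.log_le_log (by positivity) (by linarith)
    have := Real.log_two_lt_d9
    rw [hφ]; linarith
  -- M
  set M : ℕ := ⌊1/(4*t)⌋₊ with hM
  have hMle : (M:ℝ) ≤ 1/(4*t) := Nat.floor_le (by positivity)
  have hMgt : 1/(4*t) < (M:ℝ) + 1 := Nat.lt_floor_add_one _
  set m0 : ℕ := min N M with hm0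
  -- split
  have hsplit : Finset.Icc (1:ℕ) N = Finset.Icc 1 m0 ∪ Finset.Icc (m0+1) N := by
    ext a; simp only [Finset.mem_Icc, Finset.mem_union]; omega
  have hdisj : Disjoint (Finset.Icc (1:ℕ) m0) (Finset.Icc (m0+1) N) := by
    rw [Finset.disjoint_left]; intro a ha hb
    rw [Finset.mem_Icc] at ha hb; omega
  set f : ℝ := ∑ k ∈ Finset.Icc (1:ℕ) N, Real.cos (2 * π * k * t) / k with hf
  set head : ℝ := ∑ k ∈ Finset.Icc (1:ℕ) m0, Real.cos (2 * π * k * t) / k with hhead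
  set tail : ℝ := ∑ k ∈ Finset.Icc (m0+1) N, Real.cos (2 * π * k * t) / k with htail
  have hfsplit : f = head + tail := by rw [hf, hsplit, Finset.sum_union hdisj]
  -- head ≥ 0
  have hhead0 : 0 ≤ head := by
    apply Finset.sum_nonneg
    intro k hk
    rw [Finset.mem_Icc] at hk
    have hkM : (k:ℝ) ≤ M := by exact_mod_cast le_trans hk.2 (min_le_right N M)
    have hkt : (k:ℝ) * t ≤ 1/4 := by
      calc (k:ℝ) * t ≤ (1/(4*t)) * t :=
            mul_le_mul_of_nonneg_right (le_trans hkM hMle) h0.le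
      _ = 1/4 := by field_simp
    have hcos : 0 ≤ Real.cos (2 * π * k * t) := by
      apply Real.cos_nonneg_of_mem_Icc
      constructor
      · have : (0:ℝ) ≤ 2 * π * k * t := by positivity
        linarith
      · have h25 : 2 * π * ((k:ℝ) * t) ≤ 2 * π * (1/4) :=
          mul_le_mul_of_nonneg_left hkt (by positivity)
        calc 2 * π * (k:ℝ) * t = 2 * π * ((k:ℝ) * t) := by ring
        _ ≤ 2 * π * (1/4) := h25
        _ = π/2 := by ring
    positivity
  -- head upper bound
  have hlogmax : (0:ℝ) ≤ Real.log (1/(4*t)) ∨ m0 = 0 := by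
    rcases Nat.eq_zero_or_pos m0 with h | h
    · right; exact h
    · left
      have : (1:ℝ) ≤ (M:ℝ) := by
        have : 1 ≤ M := le_trans h (min_le_right N M)
        exact_mod_cast this
      apply Real.log_nonneg; linarith
  have hheadub : head ≤ 1 + max 0 (Real.log (1/(4*t))) := by
    rcases Nat.eq_zero_or_pos m0 with h | h
    · rw [hhead, h, Finset.Icc_eq_empty (by omega), Finset.sum_empty]
      have := le_max_left (0:ℝ) (Real.log (1/(4*t)))
      linarith
    · have h1 : head ≤ ∑ k ∈ Finset.Icc (1:ℕ) m0, ((k:ℝ))⁻¹ := by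
        apply Finset.sum_le_sum
        intro k hk
        rw [Finset.mem_Icc] at hk
        have hk0 : (0:ℝ) < k := by exact_mod_cast hk.1
        rw [div_eq_mul_inv]
        have hc := Real.cos_le_one (2 * π * k * t)
        have hki : (0:ℝ) ≤ ((k:ℝ))⁻¹ := by positivity
        nlinarith
      have h2' : ∑ k ∈ Finset.Icc (1:ℕ) m0, ((k:ℝ))⁻¹ = ((harmonic m0 : ℚ) : ℝ) := by
        rw [harmonic_eq_sum_Icc]; push_cast; rfl
      have h3 := harmonic_le_one_add_log m0
      have h4 : Real.log m0 ≤ Real.log (1/(4*t)) := by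
        apply Real.log_le_log (by exact_mod_cast h)
        calc (m0:ℝ) ≤ (M:ℝ) := by exact_mod_cast min_le_right N M
        _ ≤ 1/(4*t) := hMle
      have h5 : Real.log (1/(4*t)) ≤ max 0 (Real.log (1/(4*t))) := le_max_right _ _
      linarith
  -- tail bound
  have htailub : |tail| ≤ 2 := by
    rcases le_or_gt N m0 with h | h
    · have : Finset.Icc (m0+1) N = ∅ := Finset.Icc_eq_empty (by omega)
      rw [htail, this]; simp
    · have hm0M : m0 = M := by omega
      have habel := abel_bound (fun k => Real.cos (2 * π * k * t)) (1 / Real.sin (π * t))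
        (by positivity) (M+1) N (by omega)
        (fun j _ _ => dirichlet_bound h0 ht1 (M+1) j)
      rw [htail, hm0M]
      refine le_trans habel ?_
      have hs2t : 2 * t ≤ Real.sin (π * t) := by
        have := Real.mul_le_sin (x := π * t) (by positivity) (by nlinarith)
        calc 2 * t = 2 / π * (π * t) := by field_simp
        _ ≤ Real.sin (π * t) := this
      have hM1 : (0:ℝ) < (M:ℝ) + 1 := by positivity
      have h14 : 1 / Real.sin (π * t) ≤ 1/(2*t) := by
        apply one_div_le_one_div_of_le (by linarith) hs2t
      have h15 : 1/(2*t) = 2 * (1/(4*t)) := by field_simp; ring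
      rw [show ((M+1:ℕ):ℝ) = (M:ℝ) + 1 by push_cast; ring]
      rw [div_le_iff₀ hM1]
      linarith [h14, h15, hMgt]
  -- combine
  have hfub : f ≤ 3 + max 0 (Real.log (1/(4*t))) := by
    have := abs_le.mp htailub
    rw [hfsplit]; linarith
  have hflb : -2 ≤ f := by
    have := abs_le.mp htailub
    rw [hfsplit]; linarith
  -- log bound by φ
  have hlogφ : max 0 (Real.log (1/(4*t))) ≤ φ := by
    apply max_le (by linarith)
    have hsinle : Real.sin (π * t) ≤ π * t := Real.sin_le (by positivity)
    have hlog1 : Real.log (2 * Real.sin (π*t)) ≤ Real.log (2 * (π * t)) :=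
      Real.log_le_log (by positivity) (by linarith)
    have hsplit2 : Real.log (2 * (π * t)) = Real.log (π/2) + Real.log (4*t) := by
      rw [← Real.log_mul (by positivity) (by positivity)]
      congr 1; field_simp; ring
    have hlogpi2 : Real.log (π/2) ≤ 1 := by
      have h1 : Real.log (π/2) ≤ π/2 - 1 := Real.log_le_sub_one_of_pos (by positivity)
      have := Real.pi_le_four
      linarith
    rw [one_div, Real.log_inv]
    rw [hφ]
    linarith
  have h30 : |1 + 2*f| ≤ 30 * φ := by
    have hmax0 : (0:ℝ) ≤ max 0 (Real.log (1/(4*t))) := le_max_left _ _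
    rw [abs_le]
    constructor
    · linarith
    · linarith
  rw [Kk_eq N t, ← hf]
  exact h30

lemma Kk_neg (N : ℕ) (t : ℝ) : Kk N (-t) = Kk N t := by
  apply Finset.sum_congr rfl
  intro a _
  rw [show 2 * π * (a:ℝ) * (-t) = -(2 * π * a * t) by ring, Real.cos_neg]

lemma Kk_one_sub (N : ℕ) (t : ℝ) : Kk N (1 - t) = Kk N t := by
  apply Finset.sum_congr rfl
  intro a _
  rw [show 2 * π * (a:ℝ) * (1 - t) = (a:ℝ) * (2 * π) - 2 * π * a * t by ring,
    Real.cos_int_mul_two_pi_sub]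

lemma Kk_bound (N : ℕ) {t : ℝ} (h1 : -1 < t) (h2 : t < 1) (h3 : t ≠ 0) :
    |Kk N t| ≤ 30 * (1 - Real.log (2 * |Real.sin (Real.pi * t)|)) := by
  have key : ∀ s : ℝ, 0 < s → s < 1 →
      |Kk N s| ≤ 30 * (1 - Real.log (2 * |Real.sin (π * s)|)) := by
    intro s hs0 hs1
    rcases le_or_gt s (1/2) with h | h
    · exact Kk_bound_half N hs0 h
    · have hu0 : 0 < 1 - s := by linarith
      have hu2 : 1 - s ≤ 1/2 := by linarith
      have hb := Kk_bound_half N hu0 hu2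
      have e1 := Kk_one_sub N (1-s)
      rw [show (1:ℝ) - (1-s) = s from by ring] at e1
      rw [e1]
      rw [show π * (1 - s) = π - π * s from by ring, Real.sin_pi_sub] at hb
      exact hb
  rcases lt_or_gt_of_ne h3 with h | h
  · have := key (-t) (by linarith) (by linarith)
    rw [Kk_neg] at this
    rw [show π * (-t) = -(π * t) from by ring, Real.sin_neg, abs_neg] at this
    exact this
  · exact key t h (by linarith)

noncomputable def Fc (N : ℕ) (s : ℝ) : ℂ :=
  ∑ a ∈ Finset.Icc (-(N:ℤ)) N,
    ((1 / max 1 |(a:ℝ)| : ℝ) : ℂ) * Complex.exp (((2 * Real.pi * a * s : ℝ) : ℂ) * Complex.I)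

lemma Fc_real (N : ℕ) (s : ℝ) : Fc N s = ((Kk N s : ℝ) : ℂ) := by
  apply Complex.ext
  · rw [Fc, Complex.re_sum, Complex.ofReal_re, Kk]
    apply Finset.sum_congr rfl
    intro a _
    rw [Complex.re_ofReal_mul, Complex.exp_ofReal_mul_I_re]
  · rw [Fc, Complex.im_sum, Complex.ofReal_im]
    apply Finset.sum_involution (fun a _ => -a)
    · intro a ha
      rw [Complex.im_ofReal_mul, Complex.im_ofReal_mul,
        Complex.exp_ofReal_mul_I_im, Complex.exp_ofReal_mul_I_im]
      push_cast
      rw [show 2 * π * (-(a:ℝ)) * s = -(2 * π * a * s) by ring, Real.sin_neg, abs_neg]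
      ring
    · intro a _ hne
      simp only [ne_eq]
      intro h
      apply hne
      have : a = 0 := by omega
      subst this
      simp
    · intro a ha
      simp only [neg_neg]
    · intro a ha
      simp only [Finset.mem_Icc] at ha ⊢
      omega

lemma stepC (N d : ℕ) (y : Fin d → ℝ) :
    ∑ k ∈ Fintype.piFinset (fun _ : Fin d => Finset.Icc (-(N:ℤ)) (N:ℤ)),
      (1 / ∏ j : Fin d, max 1 |(k j : ℝ)|) * Real.cos (2 * Real.pi * (∑ j, (k j : ℝ) * y j))
    = ∏ j : Fin d, Kk N (y j) := by
  have hterm : ∀ k : Fin d → ℤ,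
      (1 / ∏ j : Fin d, max 1 |(k j : ℝ)|) * Real.cos (2 * π * (∑ j, (k j : ℝ) * y j))
      = (∏ j : Fin d, (((1 / max 1 |(k j : ℝ)| : ℝ) : ℂ)
          * Complex.exp (((2 * π * (k j) * (y j) : ℝ) : ℂ) * Complex.I))).re := by
    intro k
    rw [Finset.prod_mul_distrib]
    rw [← Complex.ofReal_prod]
    rw [← Complex.exp_sum]
    have hsum : ∑ j : Fin d, (((2 * π * (k j) * (y j) : ℝ) : ℂ) * Complex.I)
        = ((2 * π * (∑ j, (k j : ℝ) * y j) : ℝ) : ℂ) * Complex.I := by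
      rw [← Finset.sum_mul]
      congr 1
      push_cast
      rw [Finset.mul_sum]
      apply Finset.sum_congr rfl
      intro j _
      ring
    rw [hsum, Complex.re_ofReal_mul, Complex.exp_ofReal_mul_I_re]
    congr 1
    rw [Finset.prod_div_distrib]
    simp
  calc ∑ k ∈ Fintype.piFinset (fun _ : Fin d => Finset.Icc (-(N:ℤ)) (N:ℤ)),
        (1 / ∏ j : Fin d, max 1 |(k j : ℝ)|) * Real.cos (2 * π * (∑ j, (k j : ℝ) * y j))
      = (∑ k ∈ Fintype.piFinset (fun _ : Fin d => Finset.Icc (-(N:ℤ)) (N:ℤ)),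
          ∏ j : Fin d, (((1 / max 1 |(k j : ℝ)| : ℝ) : ℂ)
            * Complex.exp (((2 * π * (k j) * (y j) : ℝ) : ℂ) * Complex.I))).re := by
        rw [Complex.re_sum]
        exact Finset.sum_congr rfl fun k _ => hterm k
    _ = (∏ j : Fin d, Fc N (y j)).re := by
        congr 1
        simp only [Fc]
        rw [Finset.prod_univ_sum]
    _ = ∏ j : Fin d, Kk N (y j) := by
        have h2 : ∏ j : Fin d, Fc N (y j) = ((∏ j : Fin d, Kk N (y j) : ℝ) : ℂ) := by
          rw [Complex.ofReal_prod]
          exact Finset.prod_congr rfl fun j _ => Fc_real N (y j)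
        rw [h2, Complex.ofReal_re]

lemma stepA (N : ℕ) (c : Fin N → ℝ) :
    ‖∑ ℓ : Fin N, Complex.exp (((2 * Real.pi * c ℓ : ℝ) : ℂ) * Complex.I)‖^2
    = ∑ m : Fin N, ∑ n : Fin N, Real.cos (2 * Real.pi * (c m - c n)) := by
  set S := ∑ ℓ : Fin N, Complex.exp (((2 * Real.pi * c ℓ : ℝ) : ℂ) * Complex.I) with hS
  have h1 : ‖S‖^2 = (S * (starRingEnd ℂ) S).re := by
    rw [Complex.sq_norm, Complex.mul_conj, Complex.ofReal_re]
  rw [h1, hS]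
  rw [map_sum]
  rw [Finset.sum_mul_sum]
  rw [Complex.re_sum]
  apply Finset.sum_congr rfl
  intro m _
  rw [Complex.re_sum]
  apply Finset.sum_congr rfl
  intro n _
  rw [← Complex.exp_conj]
  have hconj : (starRingEnd ℂ) (((2 * π * c n : ℝ) : ℂ) * Complex.I)
      = ((-(2 * π * c n) : ℝ) : ℂ) * Complex.I := by
    rw [map_mul, Complex.conj_I, Complex.conj_ofReal]
    push_cast
    ring
  rw [hconj, ← Complex.exp_add]
  have harg : ((2 * π * c m : ℝ) : ℂ) * Complex.I + ((-(2 * π * c n) : ℝ) : ℂ) * Complex.I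
      = ((2 * π * (c m - c n) : ℝ) : ℂ) * Complex.I := by
    push_cast
    ring
  rw [harg, Complex.exp_ofReal_mul_I_re]

lemma lhs_eq (N d : ℕ) (x : Fin N → Fin d → ℝ) :
    ∑ k ∈ Fintype.piFinset (fun _ : Fin d => Finset.Icc (-(N : ℤ)) (N : ℤ)),
        (1 / ∏ j : Fin d, max 1 |(k j : ℝ)|) *
          ‖∑ ℓ : Fin N,
              Complex.exp (2 * Real.pi * Complex.I * (∑ j : Fin d, (k j : ℝ) * x ℓ j))‖ ^ 2
    = ∑ m : Fin N, ∑ n : Fin N, ∏ j : Fin d, Kk N (x m j - x n j) := by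
  have hA : ∀ k : Fin d → ℤ,
      ‖∑ ℓ : Fin N,
          Complex.exp (2 * Real.pi * Complex.I * (∑ j : Fin d, (k j : ℝ) * x ℓ j))‖ ^ 2
      = ∑ m : Fin N, ∑ n : Fin N,
          Real.cos (2 * π * (∑ j, (k j : ℝ) * (x m j - x n j))) := by
    intro k
    have hrw : ∀ ℓ : Fin N,
        Complex.exp (2 * Real.pi * Complex.I * (∑ j : Fin d, (k j : ℝ) * x ℓ j))
        = Complex.exp (((2 * Real.pi * (∑ j : Fin d, (k j : ℝ) * x ℓ j) : ℝ) : ℂ)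
            * Complex.I) := by
      intro ℓ
      congr 1
      push_cast
      ring
    rw [Finset.sum_congr rfl fun ℓ _ => hrw ℓ]
    rw [stepA N (fun ℓ => ∑ j : Fin d, (k j : ℝ) * x ℓ j)]
    apply Finset.sum_congr rfl
    intro m _
    apply Finset.sum_congr rfl
    intro n _
    congr 1
    rw [← Finset.sum_sub_distrib]
    congr 1
    apply Finset.sum_congr rfl
    intro j _
    ring
  calc ∑ k ∈ Fintype.piFinset (fun _ : Fin d => Finset.Icc (-(N : ℤ)) (N : ℤ)),
        (1 / ∏ j : Fin d, max 1 |(k j : ℝ)|) *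
          ‖∑ ℓ : Fin N,
              Complex.exp (2 * Real.pi * Complex.I * (∑ j : Fin d, (k j : ℝ) * x ℓ j))‖ ^ 2
      = ∑ k ∈ Fintype.piFinset (fun _ : Fin d => Finset.Icc (-(N : ℤ)) (N : ℤ)),
          ∑ m : Fin N, ∑ n : Fin N, (1 / ∏ j : Fin d, max 1 |(k j : ℝ)|) *
            Real.cos (2 * π * (∑ j, (k j : ℝ) * (x m j - x n j))) := by
        apply Finset.sum_congr rfl
        intro k _
        rw [hA k, Finset.mul_sum]
        apply Finset.sum_congr rfl
        intro m _
        rw [Finset.mul_sum]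
    _ = ∑ m : Fin N, ∑ n : Fin N, ∏ j : Fin d, Kk N (x m j - x n j) := by
        rw [Finset.sum_comm]
        apply Finset.sum_congr rfl
        intro m _
        rw [Finset.sum_comm]
        apply Finset.sum_congr rfl
        intro n _
        exact stepC N d (fun j => x m j - x n j)

lemma log_le_log2 {v : ℝ} (h0 : 0 ≤ v) (h2 : v ≤ 2) : Real.log v ≤ Real.log 2 := by
  rcases eq_or_lt_of_le h0 with h | h
  · rw [← h, Real.log_zero]
    exact Real.log_nonneg (by norm_num)
  · exact Real.log_le_log h h2

lemma phi_ge (s : ℝ) : 1 - Real.log 2 ≤ 1 - Real.log (2 * |Real.sin s|) := by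
  have h1 : |Real.sin s| ≤ 1 := abs_le.mpr ⟨Real.neg_one_le_sin s, Real.sin_le_one s⟩
  have := log_le_log2 (v := 2 * |Real.sin s|) (by positivity) (by linarith)
  linarith

lemma log2_lt : Real.log 2 < 1 := by
  have := Real.log_two_lt_d9
  linarith

end

open Finset Real in
/-- For every dimension `d ≥ 1` there is `C > 0`, depending only on `d`,
such that for every `N ≥ 2` and every tuple `X = (x_1,…,x_N)` of points of `[0,1)^d`
whose coordinates satisfy `x_{m,k} ≠ x_{n,k}` for all `m ≠ n` and all `k`, one has
`Σ_{k ∈ ℤ^d, ‖k‖_∞ ≤ N} (1/r(k)) |Σ_{ℓ=1}^N e^{2πi⟨k,x_ℓ⟩}|² ≤ C · E(X)`,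
where `r(k) = Π_j max{1,|k_j|}`. -/
theorem stmt_7 (d : ℕ) (hd : 1 ≤ d) :
    ∃ C : ℝ, 0 < C ∧ ∀ N : ℕ, 2 ≤ N → ∀ x : Fin N → Fin d → ℝ,
      (∀ m k, x m k ∈ Set.Ico (0 : ℝ) 1) →
      (∀ m n : Fin N, m ≠ n → ∀ k : Fin d, x m k ≠ x n k) →
      ∑ k ∈ Fintype.piFinset (fun _ : Fin d => Finset.Icc (-(N : ℤ)) (N : ℤ)),
          (1 / ∏ j : Fin d, max 1 |(k j : ℝ)|) *
            ‖∑ ℓ : Fin N,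
                Complex.exp (2 * Real.pi * Complex.I * (∑ j : Fin d, (k j : ℝ) * x ℓ j))‖ ^ 2
        ≤ C * energyE x := by
  have hc0 : (0:ℝ) < 1 - Real.log 2 := by linarith [log2_lt]
  refine ⟨(30:ℝ)^d + 2 * (5*d)^d / (1 - Real.log 2)^d, by positivity, ?_⟩
  intro N hN x hx hsep
  have hN1 : (1:ℝ) ≤ (N:ℝ) := by exact_mod_cast le_trans (by norm_num) hN
  have hN0 : (0:ℝ) < (N:ℝ) := by linarith
  -- diagonal bound
  have hdiag : (Kk N 0)^d ≤ (5*d)^d * N := by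
    set u : ℝ := (N:ℝ) ^ ((1:ℝ)/d) with hu
    have hu1 : (1:ℝ) ≤ u := Real.one_le_rpow hN1 (by positivity)
    have hlogu : Real.log (N:ℝ) = d * Real.log u := by
      rw [hu, Real.log_rpow hN0]
      field_simp
    have hloguu : Real.log u ≤ u := le_trans (Real.log_le_sub_one_of_pos (by linarith)) (by linarith)
    have hd1 : (1:ℝ) ≤ (d:ℝ) := by exact_mod_cast hd
    have hK0 : Kk N 0 ≤ 5 * d * u := by
      have h1 := Kk_zero N (by omega)
      have h2 : Real.log (N:ℝ) ≤ d * u := by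
        rw [hlogu]
        exact mul_le_mul_of_nonneg_left hloguu (by positivity)
      have h3 : (3:ℝ) ≤ 3 * (d * u) := by nlinarith
      nlinarith
    have hud : u ^ d = (N:ℝ) := by
      rw [hu, ← Real.rpow_natCast ((N:ℝ) ^ ((1:ℝ)/d)) d, ← Real.rpow_mul (le_of_lt hN0)]
      rw [show (1:ℝ)/d * d = 1 by field_simp, Real.rpow_one]
    calc (Kk N 0)^d ≤ (5 * d * u)^d := pow_le_pow_left₀ (Kk_zero_nonneg N) hK0 d
    _ = (5*d)^d * u^d := by rw [mul_pow]
    _ = (5*d)^d * N := by rw [hud]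
  -- off-diagonal bound
  have hoff : ∀ m n : Fin N, m ≠ n →
      ∏ j : Fin d, Kk N (x m j - x n j)
        ≤ 30^d * ∏ j : Fin d, (1 - Real.log (2 * |Real.sin (π * (x m j - x n j))|)) := by
    intro m n hmn
    have hbd : ∀ j : Fin d, |Kk N (x m j - x n j)|
        ≤ 30 * (1 - Real.log (2 * |Real.sin (π * (x m j - x n j))|)) := by
      intro j
      have h1 := (hx m j).1
      have h2 := (hx m j).2
      have h3 := (hx n j).1
      have h4 := (hx n j).2
      exact Kk_bound N (by linarith) (by linarith) (sub_ne_zero.mpr (hsep m n hmn j))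
    calc ∏ j : Fin d, Kk N (x m j - x n j) ≤ |∏ j : Fin d, Kk N (x m j - x n j)| :=
          le_abs_self _
    _ = ∏ j : Fin d, |Kk N (x m j - x n j)| := Finset.abs_prod _ _
    _ ≤ ∏ j : Fin d, 30 * (1 - Real.log (2 * |Real.sin (π * (x m j - x n j))|)) :=
          Finset.prod_le_prod (fun j _ => abs_nonneg _) (fun j _ => hbd j)
    _ = 30^d * ∏ j : Fin d, (1 - Real.log (2 * |Real.sin (π * (x m j - x n j))|)) := by
          rw [Finset.prod_mul_distrib, Finset.prod_const, Finset.card_univ, Fintype.card_fin]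
  -- energy lower bound
  have hE : (1 - Real.log 2)^d * ((N:ℝ) * (N - 1)) ≤ energyE x := by
    rw [energyE]
    have hterm : ∀ m n : Fin N,
        (if m ≠ n then (1 - Real.log 2)^d else 0)
        ≤ (if m ≠ n then
            ∏ k : Fin d, (1 - Real.log (2 * |Real.sin (π * (x m k - x n k))|)) else 0) := by
      intro m n
      by_cases h : m = n
      · simp [h]
      · simp only [h, ne_eq, not_false_eq_true, if_true]
        apply Finset.prod_le_prod (fun j _ => le_of_lt hc0) (fun j _ => phi_ge _) |>.trans_eq' ?_
        rw [Finset.prod_const, Finset.card_univ, Fintype.card_fin]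
    have hsum : ∑ m : Fin N, ∑ n : Fin N, (if m ≠ n then (1 - Real.log 2)^d else 0)
        = (1 - Real.log 2)^d * ((N:ℝ) * (N - 1)) := by
      have hrow : ∀ m : Fin N, ∑ n : Fin N, (if m ≠ n then (1 - Real.log 2)^d else 0)
          = (N:ℝ) * (1 - Real.log 2)^d - (1 - Real.log 2)^d := by
        intro m
        have h1 : ∀ n : Fin N, (if m ≠ n then (1 - Real.log 2)^d else 0)
            = (1 - Real.log 2)^d - (if m = n then (1 - Real.log 2)^d else 0) := by
          intro n
          by_cases h : m = n <;> simp [h]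
        rw [Finset.sum_congr rfl fun n _ => h1 n, Finset.sum_sub_distrib]
        rw [Finset.sum_ite_eq, if_pos (Finset.mem_univ m), Finset.sum_const,
          Finset.card_univ, Fintype.card_fin, nsmul_eq_mul]
      rw [Finset.sum_congr rfl fun m _ => hrow m, Finset.sum_const, Finset.card_univ,
        Fintype.card_fin, nsmul_eq_mul]
      ring
    calc (1 - Real.log 2)^d * ((N:ℝ) * (N - 1))
        = ∑ m : Fin N, ∑ n : Fin N, (if m ≠ n then (1 - Real.log 2)^d else 0) := hsum.symm
      _ ≤ _ := Finset.sum_le_sum fun m _ => Finset.sum_le_sum fun n _ => hterm m n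
  -- main chain
  rw [lhs_eq N d x]
  have hsplit : ∀ m n : Fin N, ∏ j : Fin d, Kk N (x m j - x n j)
      ≤ 30^d * (if m ≠ n then
          ∏ j : Fin d, (1 - Real.log (2 * |Real.sin (π * (x m j - x n j))|)) else 0)
        + (if m = n then (5*(d:ℝ))^d * (N:ℝ) else 0) := by
    intro m n
    by_cases h : m = n
    · subst h
      simp only [ne_eq, not_true_eq_false, if_false, if_true, mul_zero, zero_add]
      have : ∀ j : Fin d, Kk N (x m j - x m j) = Kk N 0 := by
        intro j; rw [sub_self]
      rw [Finset.prod_congr rfl fun j _ => this j, Finset.prod_const, Finset.card_univ,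
        Fintype.card_fin]
      exact hdiag
    · simp only [h, ne_eq, not_false_eq_true, if_true, if_false, add_zero]
      exact hoff m n h
  calc ∑ m : Fin N, ∑ n : Fin N, ∏ j : Fin d, Kk N (x m j - x n j)
      ≤ ∑ m : Fin N, ∑ n : Fin N, (30^d * (if m ≠ n then
          ∏ j : Fin d, (1 - Real.log (2 * |Real.sin (π * (x m j - x n j))|)) else 0)
        + (if m = n then (5*(d:ℝ))^d * N else 0)) :=
        Finset.sum_le_sum fun m _ => Finset.sum_le_sum fun n _ => hsplit m n
    _ = 30^d * energyE x + (N:ℝ) * ((5*d)^d * N) := by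
        rw [energyE]
        simp only [Finset.sum_add_distrib]
        congr 1
        · rw [Finset.mul_sum]
          apply Finset.sum_congr rfl
          intro m _
          rw [Finset.mul_sum]
        · have hrow : ∀ m : Fin N, ∑ n : Fin N, (if m = n then (5*(d:ℝ))^d * N else 0)
              = (5*(d:ℝ))^d * N := by
            intro m
            rw [Finset.sum_ite_eq, if_pos (Finset.mem_univ m)]
          rw [Finset.sum_congr rfl fun m _ => hrow m, Finset.sum_const, Finset.card_univ,
            Fintype.card_fin, nsmul_eq_mul]
    _ ≤ ((30:ℝ)^d + 2 * (5*d)^d / (1 - Real.log 2)^d) * energyE x := by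
        have hNN : (N:ℝ) * ((5*d)^d * N) ≤ (5*(d:ℝ))^d * (2 * ((N:ℝ) * (N-1))) := by
          have : (N:ℝ) ≤ 2 * ((N:ℝ) - 1) := by
            have : (2:ℝ) ≤ (N:ℝ) := by exact_mod_cast hN
            linarith
          have hp : (0:ℝ) ≤ (5*(d:ℝ))^d := by positivity
          have h2 := mul_le_mul_of_nonneg_left this (mul_nonneg hp hN0.le)
          nlinarith [h2]
        have hfrac : (5*(d:ℝ))^d * (2 * ((N:ℝ) * (N-1)))
            ≤ 2 * (5*d)^d / (1 - Real.log 2)^d * energyE x := by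
          have hpow : (0:ℝ) < (1 - Real.log 2)^d := by positivity
          rw [div_mul_eq_mul_div, le_div_iff₀ hpow]
          calc (5*(d:ℝ))^d * (2 * ((N:ℝ) * (N-1))) * (1 - Real.log 2)^d
              = 2 * (5*(d:ℝ))^d * ((1 - Real.log 2)^d * ((N:ℝ) * (N-1))) := by ring
            _ ≤ 2 * (5*(d:ℝ))^d * energyE x := by
                apply mul_le_mul_of_nonneg_left hE (by positivity)
        have hE0 : 0 ≤ energyE x := by
          have h1 : (0:ℝ) ≤ (1 - Real.log 2)^d * ((N:ℝ) * (N - 1)) := by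
            apply mul_nonneg (by positivity)
            nlinarith
          linarith
        have h30 : (0:ℝ) ≤ (30:ℝ)^d := by positivity
        nlinarith [hfrac, hNN]
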